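/- Malani's generating relation: for real d with d ≠ 1/2, real y, any eventually-zero sequence (A_m) of reals, and real x with 0 < |x| < 1, Σ_{n≥0} [(d)_n (d+1/2)_n / ((3/2)_n n!)] x^{2n} Σ_{m=0}^{n} A_m (−n)_m (−n−1/2)_m / m! · y^m = (1/(2x(1−2d)))(1+x)^{1−2d} Σ_{n≥0} A_n (d)_n (d−1/2)_n / n! · (x² y/(1+x)²)^n − (1/(2x(1−2d)))(1−x)^{1−2d} Σ_{n≥0} A_n (d)_n (d−1/2)_n / n! · (x² y/(1−x)²)^n. -/

import Mathlib

/-!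
Since `A` is eventually zero, the left side is a finite combination, over `m`, of the series
`∑ₙ cₙ (-n)ₘ (-n-1/2)ₘ x^(2n)` with `cₙ = (d)ₙ (d+1/2)ₙ / ((3/2)ₙ n!)`, whose terms vanish for
`n < m`. Legendre's duplication `(a)ₙ (a+1/2)ₙ 4ⁿ = (2a)₂ₙ` turns the coefficient at `n = m + j`
into `(d)ₘ (d-1/2)ₘ / (2d-1) · (2d+2m-1)₂ⱼ₊₁ / (2j+1)!`, so the series is
`x^(2m) (d)ₘ (d-1/2)ₘ / (2d-1)` times the odd part of the binomial series
`∑ₖ (a)ₖ xᵏ / k! = (1-x)^(-a)` at `a = 2d+2m-1`.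
-/

open Finset

noncomputable def poch (a : ℝ) (n : ℕ) : ℝ := (ascPochhammer ℝ n).eval a

lemma poch_add (a : ℝ) (p q : ℕ) : poch a (p + q) = poch a p * poch (a + p) q := by
  rw [poch, poch, poch, ← ascPochhammer_mul, Polynomial.eval_mul, Polynomial.eval_comp]
  simp

lemma poch_one (a : ℝ) : poch a 1 = a := by simp [poch]

lemma poch_succ (a : ℝ) (n : ℕ) : poch a (n + 1) = poch a n * (a + n) := by
  rw [poch_add, poch_one]

lemma poch_neg_natCast_of_lt {n m : ℕ} (h : n < m) : poch (-n) m = 0 :=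
  ascPochhammer_eval_neg_coe_nat_of_lt h

lemma poch_neg_natCast_mul_factorial {K N : ℕ} (h : K ≤ N) :
    poch (-N) K * (N - K).factorial = (-1) ^ K * N.factorial := by
  rw [poch, ascPochhammer_eval_neg_eq_descPochhammer, descPochhammer_eval_eq_descFactorial,
    mul_assoc, ← Nat.cast_mul, mul_comm (Nat.descFactorial _ _), Nat.factorial_mul_descFactorial h]

lemma poch_mul_poch_add_half (a : ℝ) (n : ℕ) :
    poch a n * poch (a + 1/2) n * 4 ^ n = poch (2 * a) (2 * n) := by
  induction n with
  | zero => simp [poch]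
  | succ n ih =>
    rw [show 2 * (n + 1) = 2 * n + 1 + 1 by ring, poch_succ, poch_succ, poch_succ, poch_succ, ← ih]
    push_cast
    ring

lemma poch_three_halves_mul_factorial (n : ℕ) :
    poch (3/2) n * n.factorial * 4 ^ n = (2 * n + 1).factorial := by
  have h := poch_mul_poch_add_half 1 n
  have h2 := factorial_mul_ascPochhammer ℝ 1 (2 * n)
  norm_num [poch] at h h2
  rw [add_comm, ← h2, ← h, poch]
  ring

lemma two_mul_sub_one_mul_coeff_eq (d : ℝ) (m j : ℕ) :
    (2 * d - 1) * (poch d (j + m) * poch (d + 1/2) (j + m)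
        / (poch (3/2) (j + m) * (j + m).factorial)
        * poch (-(j + m : ℕ)) m * poch (-(j + m : ℕ) - 1/2) m)
      = poch d m * poch (d - 1/2) m
        * (poch (2 * d + 2 * m - 1) (2 * j + 1) / (2 * j + 1).factorial) := by
  set n := j + m
  have hc := poch_mul_poch_add_half d n
  have hfac := poch_three_halves_mul_factorial n
  have hneg : poch (-n) m * poch (-n - 1/2) m * 4 ^ m = poch (-(2 * n + 1 : ℕ)) (2 * m) := by
    convert poch_mul_poch_add_half (-n - 1/2) m using 2 <;> push_cast <;> ring_nf
  have hfrac : poch (-(2 * n + 1 : ℕ)) (2 * m) * (2 * j + 1).factorial = (2 * n + 1).factorial := by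
    have h := poch_neg_natCast_mul_factorial (show 2 * m ≤ 2 * n + 1 by omega)
    rwa [show 2 * n + 1 - 2 * m = 2 * j + 1 by omega, pow_mul, neg_one_sq, one_pow, one_mul] at h
  have hd : poch d m * poch (d - 1/2) m * 4 ^ m = poch (2 * d - 1) (2 * m) := by
    rw [mul_comm (poch d m)]
    convert poch_mul_poch_add_half (d - 1/2) m using 3 <;> ring_nf
  have hsplit : poch (2 * d - 1) (2 * m) * poch (2 * d + 2 * m - 1) (2 * j + 1)
      = (2 * d - 1) * poch (2 * d) (2 * n) := by
    have h1 := poch_add (2 * d - 1) (2 * m) (2 * j + 1)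
    have h2 := poch_add (2 * d - 1) 1 (2 * n)
    rw [show 2 * m + (2 * j + 1) = 1 + 2 * n by omega, h2, poch_one] at h1
    convert h1.symm using 3 <;> push_cast <;> ring
  have hp : poch (3/2) n ≠ 0 := (ascPochhammer_pos n (3/2 : ℝ) (by norm_num)).ne'
  -- keep `field_simp` away from the arguments of the Pochhammer symbols
  generalize poch (3/2) n = p at *
  generalize poch d n = c₁ at *
  generalize poch (d + 1/2) n = c₂ at *
  generalize poch (-n) m = q₁ at *
  generalize poch (-n - 1/2) m = q₂ at *
  generalize poch d m = e₁ at *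
  generalize poch (d - 1/2) m = e₂ at *
  generalize poch (2 * d + 2 * m - 1) (2 * j + 1) = v at *
  field_simp
  apply mul_right_cancel₀ (mul_ne_zero (pow_ne_zero n (four_ne_zero (α := ℝ)))
    (pow_ne_zero m (four_ne_zero (α := ℝ))))
  linear_combination (2 * d - 1) * (2 * j + 1).factorial * q₁ * q₂ * 4 ^ m * hc
    + (2 * d - 1) * (2 * j + 1).factorial * poch (2 * d) (2 * n) * hneg
    + (2 * d - 1) * poch (2 * d) (2 * n) * hfrac
    - e₁ * e₂ * 4 ^ m * v * hfac - (2 * n + 1).factorial * v * hd - (2 * n + 1).factorial * hsplit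

theorem hasSum_poch_div_factorial_mul_pow (a : ℝ) {x : ℝ} (hx : |x| < 1) :
    HasSum (fun k => poch a k / k.factorial * x ^ k) ((1 - x) ^ (-a)) := by
  have hx' : x ∈ Metric.eball (0 : ℝ) 1 := by
    simpa [Metric.mem_eball, edist_dist, Real.dist_eq] using hx
  have h := (Real.one_div_one_sub_rpow_hasFPowerSeriesOnBall_zero a).hasSum hx'
  rw [zero_add, one_div, ← Real.rpow_neg (by linarith [(abs_lt.1 hx).2])] at h
  refine h.congr_fun fun k => ?_
  rw [FormalMultilinearSeries.ofScalars_apply_eq, ← Ring.multichoose_eq, smul_eq_mul, poch,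
    ← Polynomial.ascPochhammer_smeval_eq_eval, ← Ring.factorial_nsmul_multichoose_eq_ascPochhammer,
    nsmul_eq_mul, mul_div_cancel_left₀ _ (by positivity)]

theorem HasSum.odd_part {c : ℕ → ℝ} {x u v : ℝ} (hu : HasSum (fun k => c k * x ^ k) u)
    (hv : HasSum (fun k => c k * (-x) ^ k) v) :
    HasSum (fun j => c (2 * j + 1) * x ^ (2 * j + 1)) ((u - v) / 2) := by
  have hodd : Function.Injective (fun j : ℕ => 2 * j + 1) := fun a b h => by simpa using h
  have heven : ∀ k ∉ Set.range (fun j : ℕ => 2 * j + 1),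
      (c k * x ^ k - c k * (-x) ^ k) / 2 = 0 := by
    intro k hk
    have : Even k := Nat.not_odd_iff_even.1 fun ⟨j, hj⟩ => hk ⟨j, hj.symm⟩
    rw [this.neg_pow, sub_self, zero_div]
  convert (hodd.hasSum_iff heven).2 ((hu.sub hv).div_const 2) using 2 with j
  simp only [Function.comp_apply, (odd_two_mul_add_one j).neg_pow]
  ring

theorem hasSum_coeff_mul_poch_neg {d : ℝ} (hd : d ≠ 1/2) (m : ℕ) {x : ℝ} (hx : |x| < 1) :
    HasSum (fun n : ℕ => poch d n * poch (d + 1/2) n / (poch (3/2) n * n.factorial)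
        * poch (-n) m * poch (-n - 1/2) m * x ^ (2 * n + 1))
      (poch d m * poch (d - 1/2) m * x ^ (2 * m)
        * ((1 + x) ^ (1 - 2 * d - 2 * m) - (1 - x) ^ (1 - 2 * d - 2 * m)) / (2 * (1 - 2 * d))) := by
  have hd' : 2 * d - 1 ≠ 0 := fun h => hd (by linarith)
  set a : ℝ := 2 * d + 2 * m - 1
  have hodd := HasSum.odd_part (hasSum_poch_div_factorial_mul_pow a hx)
    (hasSum_poch_div_factorial_mul_pow a (x := -x) (by rwa [abs_neg]))
  rw [← hasSum_nat_add_iff' m, Finset.sum_eq_zero fun n hn => by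
    rw [poch_neg_natCast_of_lt (Finset.mem_range.1 hn)]; ring]
  have hval : poch d m * poch (d - 1/2) m * x ^ (2 * m)
        * ((1 + x) ^ (1 - 2 * d - 2 * m) - (1 - x) ^ (1 - 2 * d - 2 * m)) / (2 * (1 - 2 * d)) - 0
      = poch d m * poch (d - 1/2) m * x ^ (2 * m) / (2 * d - 1)
        * (((1 - x) ^ (-a) - (1 - -x) ^ (-a)) / 2) := by
    rw [sub_zero, sub_neg_eq_add, show -a = 1 - 2 * d - 2 * m by ring,
      show 2 * (1 - 2 * d) = -(2 * (2 * d - 1)) by ring]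
    field_simp
    ring
  rw [hval]
  refine (hodd.mul_left _).congr_fun fun j => ?_
  rw [eq_div_of_mul_eq hd' ((mul_comm _ _).trans (two_mul_sub_one_mul_coeff_eq d m j)),
    show 2 * (j + m) + 1 = 2 * m + (2 * j + 1) by ring, pow_add]
  ring

theorem hasSum_sum_range_succ_mul {α : Type*} [NonUnitalNonAssocSemiring α] [TopologicalSpace α]
    [IsTopologicalSemiring α] {a : ℕ → α} {F : ℕ → ℕ → α} {s : ℕ → α} {N : ℕ}
    (ha : ∀ m, N ≤ m → a m = 0) (hF : ∀ m n, n < m → F m n = 0) (hs : ∀ m, HasSum (F m) (s m)) :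
    HasSum (fun n => ∑ m ∈ range (n + 1), a m * F m n) (∑ m ∈ range N, a m * s m) := by
  have htrunc : ∀ n, ∑ m ∈ range (n + 1), a m * F m n = ∑ m ∈ range N, a m * F m n := by
    intro n
    calc ∑ m ∈ range (n + 1), a m * F m n = ∑ m ∈ range (max (n + 1) N), a m * F m n :=
          sum_subset (range_subset_range.2 (le_max_left _ _)) fun m _ hm => by
            rw [hF m n (by simp at hm; omega), mul_zero]
      _ = ∑ m ∈ range N, a m * F m n :=
          (sum_subset (range_subset_range.2 (le_max_right _ _)) fun m _ hm => by
            rw [ha m (by simpa using hm), zero_mul]).symm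
  simp only [htrunc]
  exact hasSum_sum fun m _ => (hs m).mul_left (a m)

lemma rpow_mul_div_sq_pow {b : ℝ} (hb : 0 < b) (s z : ℝ) (m : ℕ) :
    b ^ s * (z / b ^ 2) ^ m = b ^ (s - 2 * m) * z ^ m := by
  rw [Real.rpow_sub hb, show (2 * m : ℝ) = (2 * m : ℕ) by push_cast; ring, Real.rpow_natCast,
    div_pow, pow_mul]
  ring

/-- Malani's generating relation (with `(A_m)` eventually zero). -/
theorem stmt10 (d y : ℝ) (hd : d ≠ 1/2) (A : ℕ → ℝ) (hA : ∃ N, ∀ m, N ≤ m → A m = 0)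
    (x : ℝ) (hx0 : 0 < |x|) (hx : |x| < 1) :
    ∑' n : ℕ, (poch d n * poch (d + 1/2) n / (poch (3/2) n * n.factorial)) * x ^ (2 * n)
        * ∑ m ∈ range (n + 1),
            A m * poch (-(n : ℝ)) m * poch (-(n : ℝ) - 1/2) m / m.factorial * y ^ m
      = (1 / (2 * x * (1 - 2 * d))) * (1 + x) ^ (1 - 2 * d)
          * ∑' n : ℕ, A n * poch d n * poch (d - 1/2) n / n.factorial
              * (x ^ 2 * y / (1 + x) ^ 2) ^ n
        - (1 / (2 * x * (1 - 2 * d))) * (1 - x) ^ (1 - 2 * d)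
          * ∑' n : ℕ, A n * poch d n * poch (d - 1/2) n / n.factorial
              * (x ^ 2 * y / (1 - x) ^ 2) ^ n := by
  obtain ⟨N, hN⟩ := hA
  have hx_ne : x ≠ 0 := abs_pos.1 hx0
  have hAy : ∀ m, N ≤ m → A m * y ^ m / m.factorial = 0 := fun m hm => by simp [hN m hm]
  have hsum := hasSum_sum_range_succ_mul hAy
    (fun m n hnm => by rw [poch_neg_natCast_of_lt hnm]; ring)
    (fun m => (hasSum_coeff_mul_poch_neg hd m hx).div_const x)
  refine ((hsum.congr_fun fun n => ?_).tsum_eq).trans ?_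
  · rw [mul_sum]
    refine sum_congr rfl fun m _ => ?_
    field_simp
    ring
  rw [tsum_eq_sum (s := range N) fun n hn => by simp [hN n (by simpa using hn)],
    tsum_eq_sum (s := range N) fun n hn => by simp [hN n (by simpa using hn)],
    mul_sum, mul_sum, ← sum_sub_distrib]
  refine sum_congr rfl fun m _ => ?_
  have hd' : 1 - 2 * d ≠ 0 := fun h => hd (by linarith)
  rw [mul_assoc _ ((1 + x) ^ _), mul_left_comm ((1 + x) ^ _),
    rpow_mul_div_sq_pow (by linarith [(abs_lt.1 hx).1]), mul_assoc _ ((1 - x) ^ _),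
    mul_left_comm ((1 - x) ^ _), rpow_mul_div_sq_pow (by linarith [(abs_lt.1 hx).2]), mul_pow,
    ← pow_mul]
  field_simp
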